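/- Every continuous function f : 𝕌 → ℂ on the unit circle 𝕌 = {u ∈ ℂ : |u| = 1} satisfying u · conj(f(u)) = f(u) for all u ∈ 𝕌 must vanish at some point of 𝕌. -/

import Mathlib

open Complex
open ComplexConjugate Real

/-! Write `u = w²` with `w = exp (t i)`, `t ∈ [0, π]`. The condition `u · conj (f u) = f u` says
exactly that `conj w · f (w²)` is real, and this real number changes sign between `t = 0` and
`t = π`, where `w = 1` and `w = -1` give the same `u = 1`. The intermediate value theorem gives a
zero. -/

theorem exists_mem_uIcc_eq_zero_of_map_eq_neg {α δ : Type*} [ConditionallyCompleteLinearOrder α]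
    [TopologicalSpace α] [OrderTopology α] [DenselyOrdered α] [AddCommGroup δ] [LinearOrder δ]
    [IsOrderedAddMonoid δ] [TopologicalSpace δ] [OrderClosedTopology δ] {a b : α} {f : α → δ}
    (hf : ContinuousOn f (Set.uIcc a b)) (hab : f b = -f a) : ∃ x ∈ Set.uIcc a b, f x = 0 := by
  have hzero : (0 : δ) ∈ Set.uIcc (f a) (f b) := by
    rw [hab, Set.mem_uIcc]
    rcases le_total 0 (f a) with h | h
    · exact Or.inr ⟨neg_nonpos.mpr h, h⟩
    · exact Or.inl ⟨h, neg_nonneg.mpr h⟩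
  exact intermediate_value_uIcc hf hzero

theorem Complex.eq_zero_of_sq_mul_conj_eq_of_re_conj_mul_eq_zero {w z : ℂ} (hw : ‖w‖ = 1)
    (h : w ^ 2 * conj z = z) (hre : (conj w * z).re = 0) : z = 0 := by
  have hww : conj w * w = 1 := by rw [conj_mul', hw]; norm_num
  have hreal : conj (conj w * z) = conj w * z := by
    calc conj (conj w * z) = (conj w * w) * (w * conj z) := by simp [hww]
      _ = conj w * (w ^ 2 * conj z) := by ring
      _ = conj w * z := by rw [h]
  have hprod : conj w * z = 0 := Complex.ext hre (conj_eq_iff_im.mp hreal)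
  have hw0 : conj w ≠ 0 := left_ne_zero_of_mul_eq_one hww
  exact (mul_eq_zero.mp hprod).resolve_left hw0

theorem stmt_1 (f : ℂ → ℂ)
    (hf : ContinuousOn f {u : ℂ | ‖u‖ = 1})
    (h : ∀ u : ℂ, ‖u‖ = 1 → u * (starRingEnd ℂ) (f u) = f u) :
    ∃ u : ℂ, ‖u‖ = 1 ∧ f u = 0 := by
  set w : ℝ → ℂ := fun t => exp (t * I)
  have hw : ∀ t, ‖w t‖ = 1 := fun t => norm_exp_ofReal_mul_I t
  have hw2 : ∀ t, ‖w t ^ 2‖ = 1 := fun t => by rw [norm_pow, hw, one_pow]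
  set g : ℝ → ℝ := fun t => (conj (w t) * f (w t ^ 2)).re
  have hg : Continuous g :=
    continuous_re.comp <| (continuous_conj.comp (by fun_prop)).mul <|
      hf.comp_continuous (by fun_prop) hw2
  have hg_pi : g π = -g 0 := by simp [g, w, exp_pi_mul_I]
  obtain ⟨t, -, ht⟩ := exists_mem_uIcc_eq_zero_of_map_eq_neg hg.continuousOn hg_pi
  exact ⟨w t ^ 2, hw2 t,
    eq_zero_of_sq_mul_conj_eq_of_re_conj_mul_eq_zero (hw t) (h _ (hw2 t)) ht⟩
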